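/- Let G(x) = ∫₁^∞ e^{−x·t}/t dt for x > 0, and define F(x) = −3 + (8x+4)·e^{2x}·G(2x) − (x+1)·e^{x}·G(x). Then F is strictly decreasing on [2,∞); more precisely, for every x ≥ 2, F is differentiable at x with F′(x) = 16·(x+1)·e^{2x}·G(2x) − (x+2)·e^{x}·G(x) − 7 − 3/x, and F′(x) < 0. -/

import Mathlib

open MeasureTheory

/-- `G(x) = ∫₁^∞ e^{-x t} / t dt`. -/
noncomputable def G (x : ℝ) : ℝ := ∫ t in Set.Ioi (1 : ℝ), Real.exp (-x * t) / t

/-- `F(x) = -3 + (8x+4) e^{2x} G(2x) - (x+1) e^{x} G(x)`. -/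
noncomputable def F (x : ℝ) : ℝ :=
  -3 + (8 * x + 4) * Real.exp (2 * x) * G (2 * x) - (x + 1) * Real.exp x * G x

open Set Filter Real

noncomputable def g0 (x : ℝ) : ℝ := ∫ u in Set.Ioi x, Real.exp (-u) / u

lemma f_intOn {x : ℝ} (hx : 0 < x) :
    IntegrableOn (fun u => Real.exp (-u) / u) (Set.Ioi x) := by
  have h1 : IntegrableOn (fun u => x⁻¹ * Real.exp (-(1:ℝ) * u)) (Set.Ioi x) :=
    (exp_neg_integrableOn_Ioi x one_pos).const_mul _
  refine Integrable.mono' h1 ?_ ?_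
  · exact ((Real.measurable_exp.comp measurable_neg).div measurable_id).aestronglyMeasurable
  · filter_upwards [ae_restrict_mem measurableSet_Ioi] with u hu
    have hu0 : 0 < u := lt_trans hx hu
    rw [Real.norm_eq_abs, abs_div, abs_of_pos (Real.exp_pos _), abs_of_pos hu0, neg_one_mul]
    rw [div_le_iff₀ hu0]
    calc Real.exp (-u) = x⁻¹ * Real.exp (-u) * x := by field_simp
    _ ≤ x⁻¹ * Real.exp (-u) * u := by
        apply mul_le_mul_of_nonneg_left (le_of_lt hu) (by positivity)

lemma G_eq {x : ℝ} (hx : 0 < x) : G x = g0 x := by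
  have h1 : ∀ t ∈ Set.Ioi (1:ℝ), Real.exp (-x * t) / t
      = x * ((fun u => Real.exp (-u) / u) (x * t)) := by
    intro t ht
    have ht0 : 0 < t := lt_trans one_pos ht
    simp only
    rw [neg_mul, eq_comm, mul_div_assoc']
    rw [mul_div_mul_left _ _ (ne_of_gt hx)]
  rw [G, setIntegral_congr_fun measurableSet_Ioi h1, integral_const_mul,
    MeasureTheory.integral_comp_mul_left_Ioi (fun u => Real.exp (-u) / u) 1 hx,
    mul_one, smul_eq_mul, ← mul_assoc,
    mul_inv_cancel₀ (ne_of_gt hx), one_mul, g0]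

lemma g0_split {c y : ℝ} (hc : 0 < c) (hcy : c ≤ y) :
    g0 y = g0 c - ∫ u in c..y, Real.exp (-u) / u := by
  have hu : Set.Ioc c y ∪ Set.Ioi y = Set.Ioi c := Set.Ioc_union_Ioi_eq_Ioi hcy
  have hdisj : Disjoint (Set.Ioc c y) (Set.Ioi y) := Set.Ioc_disjoint_Ioi le_rfl
  have hI : IntegrableOn (fun u => Real.exp (-u) / u) (Set.Ioi c) := f_intOn hc
  have h1 : IntegrableOn (fun u => Real.exp (-u) / u) (Set.Ioc c y) :=
    hI.mono_set (by rw [← hu]; exact Set.subset_union_left)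
  have h2 : IntegrableOn (fun u => Real.exp (-u) / u) (Set.Ioi y) :=
    hI.mono_set (by rw [← hu]; exact Set.subset_union_right)
  have := setIntegral_union hdisj measurableSet_Ioi h1 h2 (f := fun u => Real.exp (-u) / u)
    (μ := volume)
  rw [hu] at this
  rw [intervalIntegral.integral_of_le hcy, g0, g0, this]
  ring

lemma g0_hasDeriv {x : ℝ} (hx : 0 < x) :
    HasDerivAt g0 (-(Real.exp (-x) / x)) x := by
  set c := x / 2 with hc
  have hc0 : 0 < c := by positivity
  have hcx : c < x := by rw [hc]; linarith
  have hcont : ContinuousAt (fun u => Real.exp (-u) / u) x :=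
    ((Real.continuous_exp.comp continuous_neg).continuousAt).div continuousAt_id (ne_of_gt hx)
  have hmeas : StronglyMeasurableAtFilter (fun u => Real.exp (-u) / u) (nhds x) :=
    ⟨Set.Ioi c, Ioi_mem_nhds hcx,
      ((Real.measurable_exp.comp measurable_neg).div measurable_id).aestronglyMeasurable⟩
  have hii : IntervalIntegrable (fun u => Real.exp (-u) / u) volume c x := by
    rw [intervalIntegrable_iff_integrableOn_Ioc_of_le (le_of_lt hcx)]
    exact (f_intOn hc0).mono_set Set.Ioc_subset_Ioi_self
  have hD : HasDerivAt (fun y => g0 c - ∫ u in c..y, Real.exp (-u) / u)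
      (-(Real.exp (-x) / x)) x := by
    have := (intervalIntegral.integral_hasDerivAt_right hii hmeas hcont).const_sub (g0 c)
    exact this
  apply hD.congr_of_eventuallyEq
  filter_upwards [Ioi_mem_nhds hcx] with y hy
  exact g0_split hc0 (le_of_lt hy)

lemma g0_nonneg {x : ℝ} (hx : 0 < x) : 0 ≤ g0 x := by
  apply setIntegral_nonneg measurableSet_Ioi
  intro u hu
  have : 0 < u := lt_trans hx hu
  positivity

lemma g0_le {x : ℝ} (hx : 0 < x) : g0 x ≤ Real.exp (-x) / x := by
  have h1 : g0 x ≤ ∫ u in Set.Ioi x, Real.exp (-u) * x⁻¹ := by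
    apply setIntegral_mono_on (f_intOn hx)
      (IntegrableOn.congr_fun ((exp_neg_integrableOn_Ioi x one_pos).mul_const x⁻¹)
        (fun u _ => by rw [neg_one_mul]) measurableSet_Ioi) measurableSet_Ioi
    intro u hu
    rw [div_eq_mul_inv]
    exact mul_le_mul_of_nonneg_left (by
      apply inv_anti₀ hx (le_of_lt hu)) (le_of_lt (Real.exp_pos _))
  rw [MeasureTheory.integral_mul_const, integral_exp_neg_Ioi] at h1
  rwa [div_eq_mul_inv]

lemma g0_tendsto : Tendsto g0 atTop (nhds 0) := by
  apply squeeze_zero' (by filter_upwards [eventually_gt_atTop 0] with x hx using g0_nonneg hx)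
    (g := fun x => Real.exp (-x))
  · filter_upwards [eventually_ge_atTop 1] with x hx
    calc g0 x ≤ Real.exp (-x) / x := g0_le (by linarith)
    _ ≤ Real.exp (-x) / 1 := by
        apply div_le_div_of_nonneg_left (le_of_lt (Real.exp_pos _)) one_pos hx
    _ = Real.exp (-x) := by rw [div_one]
  · exact Real.tendsto_exp_neg_atTop_nhds_zero

noncomputable def phi (x : ℝ) : ℝ := g0 x - Real.exp (-x) * ((x+3)/(x^2+4*x+2))

lemma phi_hasDeriv {x : ℝ} (hx : 0 < x) :
    HasDerivAt phi (-4 * Real.exp (-x) / (x * (x^2+4*x+2)^2)) x := by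
  have hd0 : x^2+4*x+2 ≠ 0 := by positivity
  have hexp : HasDerivAt (fun y : ℝ => Real.exp (-y)) (-Real.exp (-x)) x := by
    simpa [Function.comp_def] using (Real.hasDerivAt_exp (-x)).comp x ((hasDerivAt_id x).neg)
  have hnum : HasDerivAt (fun y : ℝ => y + 3) 1 x := (hasDerivAt_id x).add_const 3
  have hden : HasDerivAt (fun y : ℝ => y^2+4*y+2) (2*x+4) x := by
    have := ((hasDerivAt_pow 2 x).add (((hasDerivAt_id x).const_mul 4))).add_const 2
    exact this.congr_deriv (by ring)
  have hr := hnum.div hden hd0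
  have hphi := (g0_hasDeriv hx).sub (hexp.mul hr)
  refine hphi.congr_deriv ?_
  simp only [Pi.mul_apply, Pi.div_apply]
  field_simp
  ring

noncomputable def psi (x : ℝ) : ℝ :=
  Real.exp (-x) * ((x^2+5*x+2)/(x^3+6*x^2+6*x)) - g0 x

lemma psi_hasDeriv {x : ℝ} (hx : 0 < x) :
    HasDerivAt psi (-12 * Real.exp (-x) / (x^3+6*x^2+6*x)^2) x := by
  have hd0 : x^3+6*x^2+6*x ≠ 0 := by positivity
  have hexp : HasDerivAt (fun y : ℝ => Real.exp (-y)) (-Real.exp (-x)) x := by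
    simpa [Function.comp_def] using (Real.hasDerivAt_exp (-x)).comp x ((hasDerivAt_id x).neg)
  have hnum : HasDerivAt (fun y : ℝ => y^2+5*y+2) (2*x+5) x := by
    have := ((hasDerivAt_pow 2 x).add (((hasDerivAt_id x).const_mul 5))).add_const 2
    exact this.congr_deriv (by ring)
  have hden : HasDerivAt (fun y : ℝ => y^3+6*y^2+6*y) (3*x^2+12*x+6) x := by
    have := ((hasDerivAt_pow 3 x).add (((hasDerivAt_pow 2 x).const_mul 6))).add
      ((hasDerivAt_id x).const_mul 6)
    exact this.congr_deriv (by ring)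
  have hr := hnum.div hden hd0
  have hpsi := (hexp.mul hr).sub (g0_hasDeriv hx)
  refine hpsi.congr_deriv ?_
  simp only [Pi.mul_apply, Pi.div_apply]
  field_simp
  ring

lemma phi_nonneg {x : ℝ} (hx : 2 ≤ x) : 0 ≤ phi x := by
  have hanti : AntitoneOn phi (Set.Ici 2) := by
    apply antitoneOn_of_deriv_nonpos (convex_Ici 2)
    · intro y hy
      exact (phi_hasDeriv (by simp at hy; linarith)).continuousAt.continuousWithinAt
    · intro y hy
      rw [interior_Ici] at hy
      simp at hy
      exact (phi_hasDeriv (by linarith)).differentiableAt.differentiableWithinAt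
    · intro y hy
      rw [interior_Ici] at hy
      simp at hy
      have hy0 : 0 < y := by linarith
      rw [(phi_hasDeriv hy0).deriv]
      have h1 : (0:ℝ) < y * (y^2+4*y+2)^2 := by positivity
      apply div_nonpos_of_nonpos_of_nonneg _ (le_of_lt h1)
      have := Real.exp_pos (-y)
      nlinarith
  have htend : Tendsto phi atTop (nhds 0) := by
    have h2 : Tendsto (fun x => Real.exp (-x) * ((x+3)/(x^2+4*x+2))) atTop (nhds 0) := by
      apply squeeze_zero'
      · filter_upwards [eventually_gt_atTop 0] with y hy
        positivity
      · filter_upwards [eventually_ge_atTop 1] with y hy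
        calc Real.exp (-y) * ((y+3)/(y^2+4*y+2)) ≤ Real.exp (-y) * 1 := by
              apply mul_le_mul_of_nonneg_left _ (le_of_lt (Real.exp_pos _))
              rw [div_le_one (by positivity)]
              nlinarith
        _ = Real.exp (-y) := mul_one _
      · exact Real.tendsto_exp_neg_atTop_nhds_zero
    unfold phi
    simpa using g0_tendsto.sub h2
  apply le_of_tendsto htend
  filter_upwards [eventually_ge_atTop x] with y hy
  exact hanti (Set.mem_Ici.2 hx) (Set.mem_Ici.2 (le_trans hx hy)) hy

lemma psi_nonneg {x : ℝ} (hx : 2 ≤ x) : 0 ≤ psi x := by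
  have hanti : AntitoneOn psi (Set.Ici 2) := by
    apply antitoneOn_of_deriv_nonpos (convex_Ici 2)
    · intro y hy
      exact (psi_hasDeriv (by simp at hy; linarith)).continuousAt.continuousWithinAt
    · intro y hy
      rw [interior_Ici] at hy
      simp at hy
      exact (psi_hasDeriv (by linarith)).differentiableAt.differentiableWithinAt
    · intro y hy
      rw [interior_Ici] at hy
      simp at hy
      have hy0 : 0 < y := by linarith
      rw [(psi_hasDeriv hy0).deriv]
      have h1 : (0:ℝ) < (y^3+6*y^2+6*y)^2 := by positivity
      apply div_nonpos_of_nonpos_of_nonneg _ (le_of_lt h1)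
      have := Real.exp_pos (-y)
      nlinarith
  have htend : Tendsto psi atTop (nhds 0) := by
    have h2 : Tendsto (fun x => Real.exp (-x) * ((x^2+5*x+2)/(x^3+6*x^2+6*x))) atTop (nhds 0) := by
      apply squeeze_zero'
      · filter_upwards [eventually_gt_atTop 0] with y hy
        positivity
      · filter_upwards [eventually_ge_atTop 1] with y hy
        calc Real.exp (-y) * ((y^2+5*y+2)/(y^3+6*y^2+6*y)) ≤ Real.exp (-y) * 1 := by
              apply mul_le_mul_of_nonneg_left _ (le_of_lt (Real.exp_pos _))
              rw [div_le_one (by positivity)]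
              nlinarith
        _ = Real.exp (-y) := mul_one _
      · exact Real.tendsto_exp_neg_atTop_nhds_zero
    unfold psi
    simpa using h2.sub g0_tendsto
  apply le_of_tendsto htend
  filter_upwards [eventually_ge_atTop x] with y hy
  exact hanti (Set.mem_Ici.2 hx) (Set.mem_Ici.2 (le_trans hx hy)) hy

lemma F_hasDeriv {x : ℝ} (hx : 0 < x) :
    HasDerivAt F
      (16 * (x + 1) * Real.exp (2 * x) * g0 (2 * x) -
        (x + 2) * Real.exp x * g0 x - 7 - 3 / x) x := by
  have h2x : (0:ℝ) < 2 * x := by linarith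
  have h2y : HasDerivAt (fun y : ℝ => 2 * y) 2 x := by
    simpa using (hasDerivAt_id x).const_mul 2
  have hg2 : HasDerivAt (fun y => g0 (2 * y)) (-(Real.exp (-(2*x)) / (2*x)) * 2) x :=
    (g0_hasDeriv h2x).comp x h2y
  have hexp2 : HasDerivAt (fun y => Real.exp (2 * y)) (Real.exp (2*x) * 2) x :=
    (Real.hasDerivAt_exp (2*x)).comp x h2y
  have hlin : HasDerivAt (fun y : ℝ => 8 * y + 4) 8 x := by
    simpa using ((hasDerivAt_id x).const_mul 8).add_const 4
  have hlin2 : HasDerivAt (fun y : ℝ => y + 1) 1 x := (hasDerivAt_id x).add_const 1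
  have hA := (hlin.mul hexp2).mul hg2
  have hB := (hlin2.mul (Real.hasDerivAt_exp x)).mul (g0_hasDeriv hx)
  have hFt := (hA.const_add (-3)).sub hB
  have heq : (fun y => -3 + (8 * y + 4) * Real.exp (2 * y) * g0 (2 * y)
      - (y + 1) * Real.exp y * g0 y) = fun y =>
      (-3 + (fun y : ℝ => 8 * y + 4) y * Real.exp (2 * y) * g0 (2 * y))
      - (y + 1) * Real.exp y * g0 y := by rfl
  have hFt' : HasDerivAt (fun y => -3 + (8 * y + 4) * Real.exp (2 * y) * g0 (2 * y)
      - (y + 1) * Real.exp y * g0 y)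
      (16 * (x + 1) * Real.exp (2 * x) * g0 (2 * x) -
        (x + 2) * Real.exp x * g0 x - 7 - 3 / x) x := by
    refine hFt.congr_deriv ?_
    simp only [Pi.mul_apply]
    rw [Real.exp_neg, Real.exp_neg]
    have e1 := Real.exp_ne_zero x
    have e2 := Real.exp_ne_zero (2*x)
    field_simp
    ring
  apply hFt'.congr_of_eventuallyEq
  filter_upwards [Ioi_mem_nhds hx] with y hy
  have hy0 : (0:ℝ) < y := hy
  rw [F, G_eq hy0, G_eq (by linarith : (0:ℝ) < 2 * y)]

lemma key_ineq {x : ℝ} (hx : 2 ≤ x) :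
    16 * (x + 1) * Real.exp (2 * x) * g0 (2 * x) -
      (x + 2) * Real.exp x * g0 x - 7 - 3 / x < 0 := by
  have hx0 : (0:ℝ) < x := by linarith
  have h1 := psi_nonneg (x := 2 * x) (by linarith)
  have h2 := phi_nonneg hx
  unfold psi at h1
  unfold phi at h2
  have ha : Real.exp (2*x) * g0 (2*x) ≤ (4*x^2+10*x+2)/(8*x^3+24*x^2+12*x) := by
    have h3 : g0 (2*x) ≤ Real.exp (-(2*x)) * (((2*x)^2+5*(2*x)+2)/((2*x)^3+6*(2*x)^2+6*(2*x))) := by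
      linarith
    calc Real.exp (2*x) * g0 (2*x)
        ≤ Real.exp (2*x) * (Real.exp (-(2*x)) *
          (((2*x)^2+5*(2*x)+2)/((2*x)^3+6*(2*x)^2+6*(2*x)))) := by
          exact mul_le_mul_of_nonneg_left h3 (le_of_lt (Real.exp_pos _))
      _ = ((2*x)^2+5*(2*x)+2)/((2*x)^3+6*(2*x)^2+6*(2*x)) := by
          rw [← mul_assoc, ← Real.exp_add]
          norm_num
      _ = (4*x^2+10*x+2)/(8*x^3+24*x^2+12*x) := by ring_nf
  have hb : (x+3)/(x^2+4*x+2) ≤ Real.exp x * g0 x := by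
    have h3 : Real.exp (-x) * ((x+3)/(x^2+4*x+2)) ≤ g0 x := by linarith
    calc (x+3)/(x^2+4*x+2)
        = Real.exp x * (Real.exp (-x) * ((x+3)/(x^2+4*x+2))) := by
          rw [← mul_assoc, ← Real.exp_add]
          norm_num
      _ ≤ Real.exp x * g0 x := mul_le_mul_of_nonneg_left h3 (le_of_lt (Real.exp_pos _))
  have step : 16 * (x + 1) * Real.exp (2 * x) * g0 (2 * x) -
      (x + 2) * Real.exp x * g0 x - 7 - 3 / x ≤
      16 * (x + 1) * ((4*x^2+10*x+2)/(8*x^3+24*x^2+12*x)) -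
      (x + 2) * ((x+3)/(x^2+4*x+2)) - 7 - 3 / x := by
    have t1 : 16 * (x + 1) * Real.exp (2 * x) * g0 (2 * x) ≤
        16 * (x + 1) * ((4*x^2+10*x+2)/(8*x^3+24*x^2+12*x)) := by
      rw [mul_assoc]
      exact mul_le_mul_of_nonneg_left ha (by linarith)
    have t2 : (x + 2) * ((x+3)/(x^2+4*x+2)) ≤ (x + 2) * (Real.exp x * g0 x) := by
      exact mul_le_mul_of_nonneg_left hb (by linarith)
    have t3 : (x + 2) * (Real.exp x * g0 x) = (x + 2) * Real.exp x * g0 x := by ring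
    linarith
  have final : 16 * (x + 1) * ((4*x^2+10*x+2)/(8*x^3+24*x^2+12*x)) -
      (x + 2) * ((x+3)/(x^2+4*x+2)) - 7 - 3 / x < 0 := by
    have e : 16 * (x + 1) * ((4*x^2+10*x+2)/(8*x^3+24*x^2+12*x)) -
        (x + 2) * ((x+3)/(x^2+4*x+2)) - 7 - 3 / x =
        (-(4*x+2)) / (x * (2*x^2+6*x+3) * (x^2+4*x+2)) := by
      have d1 : (8:ℝ)*x^3+24*x^2+12*x ≠ 0 := by positivity
      have d2 : (x:ℝ)^2+4*x+2 ≠ 0 := by positivity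
      have d3 : (2:ℝ)*x^2+6*x+3 ≠ 0 := by positivity
      field_simp
      ring
    rw [e]
    apply div_neg_of_neg_of_pos (by linarith)
    positivity
  linarith

theorem stmt8 :
    StrictAntiOn F (Set.Ici (2 : ℝ)) ∧
      ∀ x : ℝ, 2 ≤ x →
        HasDerivAt F
            (16 * (x + 1) * Real.exp (2 * x) * G (2 * x) -
                (x + 2) * Real.exp x * G x - 7 - 3 / x) x ∧
          16 * (x + 1) * Real.exp (2 * x) * G (2 * x) -
              (x + 2) * Real.exp x * G x - 7 - 3 / x < 0 := by
  have main : ∀ x : ℝ, 2 ≤ x →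
      HasDerivAt F
          (16 * (x + 1) * Real.exp (2 * x) * G (2 * x) -
              (x + 2) * Real.exp x * G x - 7 - 3 / x) x ∧
        16 * (x + 1) * Real.exp (2 * x) * G (2 * x) -
            (x + 2) * Real.exp x * G x - 7 - 3 / x < 0 := by
    intro x hx
    have hx0 : (0:ℝ) < x := by linarith
    rw [G_eq hx0, G_eq (by linarith : (0:ℝ) < 2 * x)]
    exact ⟨F_hasDeriv hx0, key_ineq hx⟩
  refine ⟨?_, main⟩
  apply strictAntiOn_of_deriv_neg (convex_Ici 2)
  · intro y hy
    exact ((main y hy).1).continuousAt.continuousWithinAt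
  · intro y hy
    rw [interior_Ici] at hy
    have hy2 : 2 ≤ y := le_of_lt hy
    rw [((main y hy2).1).deriv]
    exact (main y hy2).2
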